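/- Let A be an n×n diagonalizable real matrix, B n×p, and F an r×n matrix of full row rank r. If rank(F·𝒞) = rank(F) where 𝒞 is the controllability matrix, then for any target state z* ∈ R^r and any initial state x0, there exists a final state x1 reachable from x0 in finite time with F·x1 = z*. -/

import Mathlib

open Matrix Set NormedSpace

/-! With the controllability Gramian `W = ∫₀ᵗ e^{(t-s)A} B Bᵀ e^{(t-s)Aᵀ} ds`, the input
`u(s) = Bᵀ e^{(t-s)Aᵀ} v` steers `0` to `W v`, so it suffices that `F W Fᵀ` is invertible.
If `F W Fᵀ w = 0`, then `∫₀ᵗ |Bᵀ e^{(t-s)Aᵀ} Fᵀ w|² ds = 0`, so `Bᵀ e^{τAᵀ} Fᵀ w` vanishes for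
`τ ∈ [0, t]`. Differentiating repeatedly and letting `τ → 0` gives `(F Aᵏ B)ᵀ w = 0` for every
`k`, that is `(F 𝒞)ᵀ w = 0`, and `w = 0` because `F 𝒞` has full row rank. -/

namespace Matrix

variable {m n o q : Type*} [Fintype m]

theorem intervalIntegral_mulVec [Fintype n] {K : ℝ → Matrix m n ℝ} (hK : Continuous K)
    (v : n → ℝ) (a b : ℝ) :
    ∫ s in a..b, K s *ᵥ v = (of fun i j => ∫ s in a..b, K s i j) *ᵥ v := by
  ext i
  have hKv : Continuous fun s => K s *ᵥ v := hK.matrix_mulVec continuous_const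
  refine ((ContinuousLinearMap.proj (R := ℝ) i).intervalIntegral_comp_comm
    (hKv.intervalIntegrable (μ := MeasureTheory.volume) a b)).symm.trans ?_
  simp only [ContinuousLinearMap.proj_apply, mulVec, dotProduct, of_apply]
  rw [intervalIntegral.integral_finsetSum fun j _ => ?_]
  · simp [intervalIntegral.integral_mul_const]
  · exact ((continuous_apply_apply i j).comp hK).mul continuous_const |>.intervalIntegrable a b

theorem dotProduct_intervalIntegral (v : m → ℝ) {f : ℝ → m → ℝ} {a b : ℝ}
    (hf : IntervalIntegrable f MeasureTheory.volume a b) :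
    v ⬝ᵥ ∫ s in a..b, f s = ∫ s in a..b, v ⬝ᵥ f s :=
  ((dotProductBilin ℝ ℝ v).toContinuousLinearMap.intervalIntegral_comp_comm hf).symm

theorem eqOn_zero_of_integral_dotProduct_self_eq_zero {f : ℝ → m → ℝ} {a b : ℝ} (hab : a < b)
    (hf : Continuous f) (h : ∫ s in a..b, f s ⬝ᵥ f s = 0) : EqOn f 0 (Icc a b) := by
  intro s hs
  by_contra hne
  have hpos : 0 < f s ⬝ᵥ f s :=
    lt_of_le_of_ne (dotProduct_self_star_nonneg (f s)) (Ne.symm (mt dotProduct_self_eq_zero.1 hne))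
  refine (intervalIntegral.integral_pos hab ?_ (fun x _ => dotProduct_self_star_nonneg (f x))
    ⟨s, hs, hpos⟩).ne' h
  exact (hf.dotProduct hf).continuousOn

theorem mulVec_transpose_injective_of_rank_eq {K : Type*} [Field K] [Fintype o] [Fintype n]
    {M : Matrix o n K} (h : M.rank = Fintype.card o) : Function.Injective Mᵀ.mulVec := by
  rw [mulVec_injective_iff, col_transpose]
  exact linearIndependent_iff_card_eq_finrank_span.2 (h ▸ M.rank_eq_finrank_span_row)

variable [DecidableEq m]

section Exponential

attribute [local instance] Matrix.linftyOpNormedRing Matrix.linftyOpNormedAlgebra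

theorem continuous_exp_smul (M : Matrix m m ℝ) : Continuous fun τ : ℝ => exp (τ • M) :=
  (differentiable_exp_smul_const ℝ M).continuous

theorem hasDerivAt_mulVec_exp_smul_mulVec [Fintype q] (N : Matrix q m ℝ) (M : Matrix m m ℝ)
    (v : m → ℝ) (τ : ℝ) :
    HasDerivAt (fun τ : ℝ => N *ᵥ (exp (τ • M) *ᵥ v)) (N *ᵥ (exp (τ • M) *ᵥ (M *ᵥ v))) τ := by
  let L : Matrix m m ℝ →L[ℝ] q → ℝ :=
    (N.mulVecLin ∘ₗ LinearMap.applyₗ v ∘ₗ toLin'.toLinearMap).toContinuousLinearMap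
  have h := L.hasFDerivAt.comp_hasDerivAt τ (hasDerivAt_exp_smul_const M τ)
  exact h.congr_deriv (congrArg (N *ᵥ ·) (mulVec_mulVec v _ M).symm)

end Exponential

theorem mulVec_pow_mulVec_eq_zero_of_eqOn_Ioo [Fintype q] {N : Matrix q m ℝ} {M : Matrix m m ℝ}
    {v : m → ℝ} {t : ℝ} (ht : 0 < t) (h : ∀ τ ∈ Ioo 0 t, N *ᵥ (exp (τ • M) *ᵥ v) = 0) (k : ℕ) :
    N *ᵥ (M ^ k *ᵥ v) = 0 := by
  have step : ∀ w : m → ℝ, (∀ τ ∈ Ioo 0 t, N *ᵥ (exp (τ • M) *ᵥ w) = 0) →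
      ∀ τ ∈ Ioo 0 t, N *ᵥ (exp (τ • M) *ᵥ (M *ᵥ w)) = 0 := fun w hw τ hτ =>
    (hasDerivAt_mulVec_exp_smul_mulVec N M w τ).unique <|
      (hasDerivAt_const τ 0).congr_of_eventuallyEq
        (Filter.eventuallyEq_of_mem (isOpen_Ioo.mem_nhds hτ) hw)
  have hk : ∀ τ ∈ Ioo 0 t, N *ᵥ (exp (τ • M) *ᵥ (M ^ k *ᵥ v)) = 0 := by
    induction k with
    | zero => simpa using h
    | succ k ih => simpa [pow_succ', mulVec_mulVec] using step _ ih
  have hcont : Continuous fun τ : ℝ => N *ᵥ (exp (τ • M) *ᵥ (M ^ k *ᵥ v)) :=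
    continuous_const.matrix_mulVec ((continuous_exp_smul M).matrix_mulVec continuous_const)
  have h0 : (0 : ℝ) ∈ closure (Ioo 0 t) := by
    rw [closure_Ioo ht.ne]
    exact left_mem_Icc.2 ht.le
  simpa using EqOn.closure hk hcont continuous_const h0

section Control

variable (A : Matrix m m ℝ) (B : Matrix m q ℝ)

def ctrbMatrix (d : ℕ) : Matrix m (Fin d × q) ℝ :=
  of fun i jc => (A ^ (jc.1 : ℕ) * B) i jc.2

theorem ctrbMatrix_transpose_mulVec_eq_zero {v : m → ℝ} (h : ∀ k : ℕ, (A ^ k * B)ᵀ *ᵥ v = 0)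
    (d : ℕ) : (ctrbMatrix A B d)ᵀ *ᵥ v = 0 := by
  funext ⟨k, j⟩
  exact congrFun (h k) j

theorem continuous_exp_sub_smul_mul (t : ℝ) : Continuous fun s : ℝ => exp ((t - s) • A) * B :=
  ((continuous_exp_smul A).comp (continuous_const.sub continuous_id)).matrix_mul continuous_const

noncomputable def gramianInput (t : ℝ) (v : m → ℝ) (s : ℝ) : q → ℝ :=
  (exp ((t - s) • A) * B)ᵀ *ᵥ v

theorem continuous_gramianInput (t : ℝ) (v : m → ℝ) : Continuous (gramianInput A B t v) :=
  (continuous_exp_sub_smul_mul A B t).matrix_transpose.matrix_mulVec continuous_const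

variable [Fintype q]

noncomputable def ctrbGramian (t : ℝ) : Matrix m m ℝ :=
  of fun i j => ∫ s in 0..t, (exp ((t - s) • A) * B * (exp ((t - s) • A) * B)ᵀ) i j

theorem integral_exp_sub_smul_mul_mulVec_gramianInput (t : ℝ) (v : m → ℝ) :
    ∫ s in 0..t, (exp ((t - s) • A) * B) *ᵥ gramianInput A B t v s = ctrbGramian A B t *ᵥ v := by
  simp_rw [gramianInput, mulVec_mulVec]
  exact intervalIntegral_mulVec ((continuous_exp_sub_smul_mul A B t).matrix_mul
    (continuous_exp_sub_smul_mul A B t).matrix_transpose) v 0 t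

theorem dotProduct_ctrbGramian_mulVec (t : ℝ) (v : m → ℝ) :
    v ⬝ᵥ (ctrbGramian A B t *ᵥ v) =
      ∫ s in 0..t, gramianInput A B t v s ⬝ᵥ gramianInput A B t v s := by
  have hcont : Continuous fun s => (exp ((t - s) • A) * B) *ᵥ gramianInput A B t v s :=
    (continuous_exp_sub_smul_mul A B t).matrix_mulVec (continuous_gramianInput A B t v)
  rw [← integral_exp_sub_smul_mul_mulVec_gramianInput,
    dotProduct_intervalIntegral v (hcont.intervalIntegrable 0 t)]
  simp_rw [dotProduct_mulVec, ← mulVec_transpose]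
  rfl

theorem transpose_pow_mul_mulVec_eq_zero_of_ctrbGramian {t : ℝ} (ht : 0 < t) {v : m → ℝ}
    (hv : v ⬝ᵥ (ctrbGramian A B t *ᵥ v) = 0) (k : ℕ) : (A ^ k * B)ᵀ *ᵥ v = 0 := by
  have hu : EqOn (gramianInput A B t v) 0 (Icc 0 t) :=
    eqOn_zero_of_integral_dotProduct_self_eq_zero ht (continuous_gramianInput A B t v)
      (by rwa [← dotProduct_ctrbGramian_mulVec])
  have hobs : ∀ τ ∈ Ioo 0 t, Bᵀ *ᵥ (exp (τ • Aᵀ) *ᵥ v) = 0 := fun τ hτ => by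
    have h := hu ⟨sub_nonneg.2 hτ.2.le, sub_le_self t hτ.1.le⟩
    simpa [gramianInput, transpose_mul, ← transpose_smul, exp_transpose, mulVec_mulVec] using h
  simpa [transpose_mul, transpose_pow, mulVec_mulVec] using
    mulVec_pow_mulVec_eq_zero_of_eqOn_Ioo ht hobs k

theorem isUnit_mul_ctrbGramian_mul_transpose [Fintype o] [DecidableEq o] {F : Matrix o m ℝ}
    {t : ℝ} (ht : 0 < t) {d : ℕ} (hrank : (F * ctrbMatrix A B d).rank = Fintype.card o) :
    IsUnit (F * ctrbGramian A B t * Fᵀ) := by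
  rw [← mulVec_injective_iff_isUnit, ← coe_mulVecLin, injective_iff_map_eq_zero]
  intro w hw
  have hquad : (Fᵀ *ᵥ w) ⬝ᵥ (ctrbGramian A B t *ᵥ (Fᵀ *ᵥ w)) = 0 := by
    rw [mulVec_transpose F w, ← dotProduct_mulVec, ← mulVec_transpose, mulVec_mulVec (Fᵀ *ᵥ w),
      mulVec_mulVec w, ← mulVecLin_apply, hw, dotProduct_zero]
  apply mulVec_transpose_injective_of_rank_eq hrank
  rw [mulVec_zero, transpose_mul, ← mulVec_mulVec]
  exact ctrbMatrix_transpose_mulVec_eq_zero A B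
    (transpose_pow_mul_mulVec_eq_zero_of_ctrbGramian A B ht hquad) d

end Control

end Matrix

theorem target_reachable_of_output_ctrb_general (n p r : ℕ)
    (A : Matrix (Fin n) (Fin n) ℝ) (B : Matrix (Fin n) (Fin p) ℝ)
    (F : Matrix (Fin r) (Fin n) ℝ)
    (𝒞 : Matrix (Fin n) (Fin n × Fin p) ℝ)
    (h𝒞 : 𝒞 = Matrix.of fun i jc => (A ^ (jc.1 : ℕ) * B) i jc.2)
    (hrank : (F * 𝒞).rank = F.rank) (hF : F.rank = r) :
    ∀ (zstar : Fin r → ℝ) (x0 : Fin n → ℝ),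
      ∃ (t1 : ℝ), 0 < t1 ∧ ∃ u : ℝ → Fin p → ℝ, Continuous u ∧
        ∃ x1 : Fin n → ℝ,
          x1 = (NormedSpace.exp (t1 • A)) *ᵥ x0 +
            ∫ s in (0:ℝ)..t1,
              (NormedSpace.exp ((t1 - s) • A) * B) *ᵥ u s ∧
          F *ᵥ x1 = zstar := by
  intro zstar x0
  subst h𝒞
  have hG : IsUnit (F * ctrbGramian A B 1 * Fᵀ) :=
    isUnit_mul_ctrbGramian_mul_transpose A B one_pos (d := n)
      ((hrank.trans hF).trans (Fintype.card_fin r).symm)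
  obtain ⟨w, hw⟩ := mulVec_surjective_iff_isUnit.2 hG (zstar - F *ᵥ (exp ((1 : ℝ) • A) *ᵥ x0))
  refine ⟨1, one_pos, gramianInput A B 1 (Fᵀ *ᵥ w), continuous_gramianInput A B 1 _, _, rfl, ?_⟩
  rw [mulVec_add, integral_exp_sub_smul_mul_mulVec_gramianInput, mulVec_mulVec (Fᵀ *ᵥ w),
    mulVec_mulVec w, hw, add_sub_cancel]

/-- Output controllability implies target-point reachability: if A is
diagonalizable, F has full row rank r and rank(F·𝒞) = rank(F), then any
target value z* can be reached from any initial state. -/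
theorem target_reachable_of_output_ctrb (n p r : ℕ)
    (A : Matrix (Fin n) (Fin n) ℝ) (B : Matrix (Fin n) (Fin p) ℝ)
    (F : Matrix (Fin r) (Fin n) ℝ)
    (hdiag : ∃ P D : Matrix (Fin n) (Fin n) ℝ,
      IsUnit P.det ∧ D.IsDiag ∧ A = P * D * P⁻¹)
    (𝒞 : Matrix (Fin n) (Fin n × Fin p) ℝ)
    (h𝒞 : 𝒞 = Matrix.of fun i jc => (A ^ (jc.1 : ℕ) * B) i jc.2)
    (hrank : (F * 𝒞).rank = F.rank) (hF : F.rank = r) :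
    ∀ (zstar : Fin r → ℝ) (x0 : Fin n → ℝ),
      ∃ (t1 : ℝ), 0 < t1 ∧ ∃ u : ℝ → Fin p → ℝ, Continuous u ∧
        ∃ x1 : Fin n → ℝ,
          x1 = (NormedSpace.exp (t1 • A)) *ᵥ x0 +
            ∫ s in (0:ℝ)..t1,
              (NormedSpace.exp ((t1 - s) • A) * B) *ᵥ u s ∧
          F *ᵥ x1 = zstar :=
  target_reachable_of_output_ctrb_general n p r A B F 𝒞 h𝒞 hrank hF
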